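/- Let α be a composition compatible with σ ∈ S_{ℓ(α)}. The canonical tableau τ^σ_{C,α} (each row σ^{-1}(i) filled with the i-th consecutive block of integers in decreasing order) is a source tableau: for every i not in Des(τ^σ_{C,α}) with i ≠ n, the entry i+1 lies in the box immediately to the left of the box containing i. -/
import Mathlib


/-- `α` is compatible with `σ`: `α_i ≥ α_j` whenever `i < j` and `σ(i) > σ(j)`. -/
def Compatible {ℓ : ℕ} (α : Fin ℓ → ℕ) (σ : Equiv.Perm (Fin ℓ)) : Prop :=
  ∀ i j : Fin ℓ, i < j → σ j < σ i → α j ≤ α i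

/-- `τ` is a standard permuted composition tableau (SPCT) of shape `α` (a composition of `n`
with `ℓ` rows, row `i` having boxes in columns `0,…,α i − 1`) and type `σ`:
the boxes are filled with the distinct entries `1,…,n`; the standardization of the first
column read top to bottom is `σ` (expressed by order-equivalence with `σ`); rows weakly
decrease left to right; and the triple condition holds. -/
def IsSPCT {ℓ : ℕ} (n : ℕ) (α : Fin ℓ → ℕ) (σ : Equiv.Perm (Fin ℓ))
    (τ : Fin ℓ → ℕ → ℕ) : Prop :=
  (∀ (i : Fin ℓ) (c : ℕ), c < α i → 1 ≤ τ i c ∧ τ i c ≤ n) ∧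
  (∀ (i : Fin ℓ) (c : ℕ) (i' : Fin ℓ) (c' : ℕ),
      c < α i → c' < α i' → τ i c = τ i' c' → i = i' ∧ c = c') ∧
  (∀ v : ℕ, 1 ≤ v → v ≤ n → ∃ (i : Fin ℓ) (c : ℕ), c < α i ∧ τ i c = v) ∧
  (∀ i i' : Fin ℓ, τ i 0 < τ i' 0 ↔ σ i < σ i') ∧
  (∀ (i : Fin ℓ) (c : ℕ), c + 1 < α i → τ i (c + 1) ≤ τ i c) ∧
  (∀ (i i' : Fin ℓ) (c : ℕ), i < i' → c < α i → c + 1 < α i' →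
      τ i' (c + 1) < τ i c → c + 1 < α i ∧ τ i' (c + 1) < τ i (c + 1))

/-- `d` is a descent of `τ`: the entry `d+1` lies weakly to the right of `d`. -/
def IsDescent {ℓ : ℕ} (α : Fin ℓ → ℕ) (τ : Fin ℓ → ℕ → ℕ) (d : ℕ) : Prop :=
  ∃ (i : Fin ℓ) (c : ℕ) (i' : Fin ℓ) (c' : ℕ),
    c < α i ∧ c' < α i' ∧ τ i c = d ∧ τ i' c' = d + 1 ∧ c ≤ c'

/-- `τ` is a source tableau: an SPCT such that for every non-descent `d ≠ n`, the entry
`d+1` lies in the box immediately to the left of the box containing `d`. -/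
def IsSourceTableau {ℓ : ℕ} (n : ℕ) (α : Fin ℓ → ℕ) (σ : Equiv.Perm (Fin ℓ))
    (τ : Fin ℓ → ℕ → ℕ) : Prop :=
  IsSPCT n α σ τ ∧
  ∀ d : ℕ, 1 ≤ d → d + 1 ≤ n → ¬ IsDescent α τ d →
    ∀ (i : Fin ℓ) (c : ℕ), c < α i → τ i c = d → ∃ c', c = c' + 1 ∧ τ i c' = d + 1

/-- `(i,j)` is a permutation-ascending composition-descending (PACD) pair for `(α; σ)`. -/
def PACD {ℓ : ℕ} (α : Fin ℓ → ℕ) (σ : Equiv.Perm (Fin ℓ)) (i j : Fin ℓ) : Prop :=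
  i < j ∧ σ i < σ j ∧ 2 ≤ α j ∧ α j ≤ α i

/-- `α` is `σ`-simple: it is compatible with `σ` and every PACD pair satisfies C1 or C2. -/
def SigmaSimple {ℓ : ℕ} (α : Fin ℓ → ℕ) (σ : Equiv.Perm (Fin ℓ)) : Prop :=
  Compatible α σ ∧
  ∀ i j : Fin ℓ, PACD α σ i j →
    (∃ k, i < k ∧ k < j ∧ σ i < σ k ∧ σ k < σ j ∧ α k = α j - 1) ∨
    (∃ k, j < k ∧ σ i < σ k ∧ σ k < σ j ∧ α k = α j)

/-- The part `α_j` has a removable node with respect to `σ`: either `σ(j) = 1`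
(the smallest value, `0` in `Fin ℓ`), or `α_j ≥ 2`, no `k < j` has `σ(k) < σ(j)` and
`α_k = α_j − 1`, and no `k > j` has `σ(k) < σ(j)` and `α_k = α_j`. -/
def Removable {ℓ : ℕ} (α : Fin ℓ → ℕ) (σ : Equiv.Perm (Fin ℓ)) (j : Fin ℓ) : Prop :=
  (σ j : ℕ) = 0 ∨
  (2 ≤ α j ∧ (∀ k, k < j → σ k < σ j → α k ≠ α j - 1) ∧
    (∀ k, j < k → σ k < σ j → α k ≠ α j))

/-- The canonical source tableau `τ^σ_{C,α}`: row `r` is filled, in decreasing order from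
left to right, with the consecutive block of integers following all entries of rows `r'`
with `σ r' < σ r`. -/
def canonEntry {ℓ : ℕ} (α : Fin ℓ → ℕ) (σ : Equiv.Perm (Fin ℓ)) (r : Fin ℓ) (c : ℕ) : ℕ :=
  (∑ j ∈ Finset.univ.filter (fun j => σ j < σ r), α j) + α r - c

/-- Block start of row `r`. -/
def canonS {ℓ : ℕ} (α : Fin ℓ → ℕ) (σ : Equiv.Perm (Fin ℓ)) (r : Fin ℓ) : ℕ :=
  ∑ j ∈ Finset.univ.filter (fun j => σ j < σ r), α j

lemma canonEntry_eq {ℓ : ℕ} (α : Fin ℓ → ℕ) (σ : Equiv.Perm (Fin ℓ)) (r : Fin ℓ) (c : ℕ) :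
    canonEntry α σ r c = canonS α σ r + α r - c := rfl

lemma canonS_add {ℓ : ℕ} (α : Fin ℓ → ℕ) (σ : Equiv.Perm (Fin ℓ)) (i : Fin ℓ) :
    canonS α σ i + α i = ∑ j ∈ Finset.univ.filter (fun j => σ j ≤ σ i), α j := by
  have h : Finset.univ.filter (fun j => σ j ≤ σ i)
      = insert i (Finset.univ.filter (fun j => σ j < σ i)) := by
    ext j
    simp only [Finset.mem_filter, Finset.mem_univ, true_and, Finset.mem_insert]
    constructor
    · intro h
      rcases lt_or_eq_of_le h with h | h
      · exact Or.inr h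
      · exact Or.inl (σ.injective h)
    · rintro (rfl | h)
      · exact le_refl _
      · exact le_of_lt h
  rw [h, Finset.sum_insert (by simp), canonS, add_comm]

lemma canonS_mono {ℓ : ℕ} (α : Fin ℓ → ℕ) (σ : Equiv.Perm (Fin ℓ)) {i i' : Fin ℓ}
    (h : σ i < σ i') : canonS α σ i + α i ≤ canonS α σ i' := by
  rw [canonS_add]
  apply Finset.sum_le_sum_of_subset
  intro j hj
  simp only [Finset.mem_filter, Finset.mem_univ, true_and] at *
  exact lt_of_le_of_lt hj h

lemma canonS_top {ℓ : ℕ} (α : Fin ℓ → ℕ) (σ : Equiv.Perm (Fin ℓ)) (i : Fin ℓ) :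
    canonS α σ i + α i ≤ ∑ j, α j := by
  rw [canonS_add]
  exact Finset.sum_le_sum_of_subset (Finset.filter_subset _ _)

lemma canon_surj {ℓ : ℕ} (α : Fin ℓ → ℕ) (σ : Equiv.Perm (Fin ℓ)) (v : ℕ)
    (hv1 : 1 ≤ v) (hv2 : v ≤ ∑ i, α i) :
    ∃ (i : Fin ℓ) (c : ℕ), c < α i ∧ canonEntry α σ i c = v := by
  rcases Nat.eq_zero_or_pos ℓ with rfl | hℓ
  · rw [Fin.sum_univ_zero] at hv2; omega
  have hne : (Finset.univ.filter (fun i => canonS α σ i < v)).Nonempty := by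
    refine ⟨σ.symm ⟨0, hℓ⟩, ?_⟩
    simp only [Finset.mem_filter, Finset.mem_univ, true_and]
    have : canonS α σ (σ.symm ⟨0, hℓ⟩) = 0 := by
      rw [canonS]
      have : Finset.univ.filter (fun j => σ j < σ (σ.symm ⟨0, hℓ⟩)) = ∅ := by
        ext j
        simp [Equiv.apply_symm_apply, Fin.lt_def]
      rw [this, Finset.sum_empty]
    omega
  obtain ⟨i, hiT, hmax⟩ := Finset.exists_max_image _ (fun i => σ i) hne
  simp only [Finset.mem_filter, Finset.mem_univ, true_and] at hiT
  have hv : v ≤ canonS α σ i + α i := by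
    by_contra h
    push_neg at h
    by_cases hl : (σ i : ℕ) + 1 < ℓ
    · set i' := σ.symm ⟨(σ i : ℕ) + 1, hl⟩ with hi'
      have hσ : σ i' = ⟨(σ i : ℕ) + 1, hl⟩ := Equiv.apply_symm_apply _ _
      have hS : canonS α σ i' = canonS α σ i + α i := by
        rw [canonS_add, canonS]
        congr 1
        ext j
        simp only [Finset.mem_filter, Finset.mem_univ, true_and, hσ, Fin.lt_def, Fin.le_def]
        omega
      have hi'T : i' ∈ Finset.univ.filter (fun i => canonS α σ i < v) := by
        simp only [Finset.mem_filter, Finset.mem_univ, true_and, hS]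
        omega
      have := hmax i' hi'T
      simp only [hσ, Fin.le_def] at this
      omega
    · have hall : Finset.univ.filter (fun j => σ j ≤ σ i) = Finset.univ := by
        ext j
        simp only [Finset.mem_filter, Finset.mem_univ, true_and, iff_true]
        have := (σ j).isLt
        exact Fin.le_def.mpr (by omega)
      have : canonS α σ i + α i = ∑ j, α j := by rw [canonS_add, hall]
      omega
  refine ⟨i, canonS α σ i + α i - v, by omega, ?_⟩
  rw [canonEntry_eq]
  omega

/-- For `α` compatible with `σ`, the canonical tableau `τ^σ_{C,α}` is a source tableau:
it is an SPCT and for every non-descent `d ≠ n`, the entry `d+1` lies in the box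
immediately to the left of `d`. -/
theorem canonical_is_source {ℓ : ℕ} (α : Fin ℓ → ℕ) (σ : Equiv.Perm (Fin ℓ))
    (hpos : ∀ i, 0 < α i) (hcomp : Compatible α σ) :
    IsSourceTableau (∑ i, α i) α σ (canonEntry α σ) := by
  constructor
  · refine ⟨?_, ?_, ?_, ?_, ?_, ?_⟩
    · -- bounds
      intro i c hc
      rw [canonEntry_eq]
      have := canonS_top α σ i
      omega
    · -- injectivity
      intro i c i' c' hc hc' heq
      rw [canonEntry_eq, canonEntry_eq] at heq
      rcases lt_trichotomy (σ i) (σ i') with h | h | h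
      · have := canonS_mono α σ h; omega
      · have hii : i = i' := σ.injective h
        subst hii
        exact ⟨rfl, by omega⟩
      · have := canonS_mono α σ h; omega
    · -- surjectivity
      exact canon_surj α σ
    · -- first column
      intro i i'
      rw [canonEntry_eq, canonEntry_eq]
      constructor
      · intro h
        rcases lt_trichotomy (σ i) (σ i') with h' | h' | h'
        · exact h'
        · have hii : i = i' := σ.injective h'
          subst hii
          omega
        · have := canonS_mono α σ h'; omega
      · intro h
        have := canonS_mono α σ h
        have := hpos i'
        omega
    · -- rows weakly decrease
      intro i c _
      rw [canonEntry_eq, canonEntry_eq]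
      omega
    · -- triple condition
      intro i i' c hii' hc hc' hlt
      rw [canonEntry_eq, canonEntry_eq] at hlt
      rcases lt_trichotomy (σ i) (σ i') with h | h | h
      · have := canonS_mono α σ h; omega
      · exact absurd (σ.injective h ▸ hii') (lt_irrefl i')
      · have hα : α i' ≤ α i := hcomp i i' hii' h
        have h1 : c + 1 < α i := lt_of_lt_of_le hc' hα
        have h2 := canonS_mono α σ h
        refine ⟨h1, ?_⟩
        rw [canonEntry_eq, canonEntry_eq]
        omega
  · -- source condition
    intro d hd1 hd2 hnd i c hc hτ
    rcases Nat.eq_zero_or_pos c with h0 | hcpos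
    · exfalso
      apply hnd
      obtain ⟨i', c', hc', hv⟩ := canon_surj α σ (d + 1) (by omega) hd2
      exact ⟨i, c, i', c', hc, hc', hτ, hv, h0 ▸ Nat.zero_le _⟩
    · refine ⟨c - 1, by omega, ?_⟩
      rw [canonEntry_eq] at hτ ⊢
      omega
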